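/- For all γ, ν, m ∈ ℕ the following products of quadratic Fourier coefficients vanish: 𝔠̄_{γ,ν,3γ+4}·𝔠̄_{γ,γ,ν} = 0; 𝔠̄_{2γ+m+4,ν,m}·𝔠̄_{γ,γ,ν} = 0; 𝔠̄_{γ,ν,m}·𝔠̄_{2γ+m+4,γ,ν} = 0; and, if moreover m ≥ 2γ + 4, also 𝔠̄_{γ,ν,m}·𝔠̄_{γ,m−2γ−4,ν} = 0 and 𝔠̄_{m−2γ−4,ν,m}·𝔠̄_{γ,γ,ν} = 0. -/

import Mathlib

open MeasureTheory

/-- Gegenbauer (ultraspherical) polynomial `C_n^{(2)}` of degree `n` with parameter `2`,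
as a real-valued function. -/
noncomputable def geg (n : ℕ) (y : ℝ) : ℝ :=
  ∑ k ∈ Finset.range (n / 2 + 1),
    (-1:ℝ) ^ k *
      ((Nat.factorial (n - k + 1) : ℝ) /
        ((Nat.factorial k : ℝ) * (Nat.factorial (n - 2 * k) : ℝ))) *
      (2 * y) ^ (n - 2 * k)

/-- The normalization constant `𝔴_n = √(8/π)/√((n+1)(n+3))`. -/
noncomputable def wYM (n : ℕ) : ℝ :=
  Real.sqrt (8 / Real.pi) / Real.sqrt (((n:ℝ) + 1) * ((n:ℝ) + 3))

/-- The quadratic Fourier coefficients `𝔠̄_{ijm}` of the spherically symmetric equivariant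
Yang–Mills equation on the Einstein cylinder. -/
noncomputable def cbar (i j m : ℕ) : ℝ :=
  wYM i * wYM j * wYM m *
    ∫ y in (-1:ℝ)..1, geg i y * geg j y * geg m y * (1 - y ^ 2) ^ ((3:ℝ) / 2)

/-- The cubic Fourier coefficients `𝔠_{ijkm}` of the spherically symmetric equivariant
Yang–Mills equation on the Einstein cylinder. -/
noncomputable def cquad (i j k m : ℕ) : ℝ :=
  wYM i * wYM j * wYM k * wYM m *
    ∫ y in (-1:ℝ)..1, geg i y * geg j y * geg k y * geg m y * (1 - y ^ 2) ^ ((5:ℝ) / 2)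

/-!
Substituting `y = cos θ`, the weight `(1 - y²)^{3/2} dy` becomes `sin⁴ θ dθ`, and
`C_m^{(2)}(cos θ) sin³ θ` is a combination of `sin ((m + 1) θ)` and `sin ((m + 3) θ)`. Both are
orthogonal on `[0, π]` to `cos^k θ sin θ` for `k < m`, so `C_m^{(2)}` is orthogonal to every
polynomial of degree `< m`. Hence `𝔠̄_{ijm}`, which is symmetric in its indices, vanishes unless
`i, j, m` satisfy the triangle inequalities, and in each of the products the two factors cannot
both satisfy them.
-/

open Real Nat Polynomial

lemma integral_cos_nat_mul_eq_zero {n : ℕ} (hn : n ≠ 0) :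
    ∫ θ in (0:ℝ)..π, cos (n * θ) = 0 := by
  rw [intervalIntegral.integral_comp_mul_left cos (Nat.cast_ne_zero.mpr hn), integral_cos,
    mul_zero, sin_zero, sin_nat_mul_pi]
  simp

lemma integral_cos_pow_mul_sin_mul_sin_eq_zero (k : ℕ) {j : ℕ} (h : k + 2 ≤ j) :
    ∫ θ in (0:ℝ)..π, cos θ ^ k * sin θ * sin (j * θ) = 0 := by
  induction k generalizing j with
  | zero =>
    obtain ⟨j, rfl⟩ := Nat.exists_eq_add_of_le' (show 1 ≤ j by omega)
    have product_to_sum : ∀ θ, cos θ ^ 0 * sin θ * sin ((j + 1 : ℕ) * θ) =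
        (cos (j * θ) - cos ((j + 2 : ℕ) * θ)) / 2 := by
      intro θ
      rw [show (j : ℝ) * θ = (j + 1 : ℕ) * θ - θ by push_cast; ring,
        show ((j + 2 : ℕ) : ℝ) * θ = (j + 1 : ℕ) * θ + θ by push_cast; ring]
      linear_combination (1 / 2) * two_mul_sin_mul_sin ((j + 1 : ℕ) * θ) θ
    simp_rw [product_to_sum]
    rw [intervalIntegral.integral_div,
      intervalIntegral.integral_sub (Continuous.intervalIntegrable (by fun_prop) _ _)
        (Continuous.intervalIntegrable (by fun_prop) _ _),
      integral_cos_nat_mul_eq_zero (by omega), integral_cos_nat_mul_eq_zero (by omega)]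
    simp
  | succ k ih =>
    obtain ⟨j, rfl⟩ := Nat.exists_eq_add_of_le' (show 1 ≤ j by omega)
    have product_to_sum : ∀ θ, cos θ ^ (k + 1) * sin θ * sin ((j + 1 : ℕ) * θ) =
        (cos θ ^ k * sin θ * sin (j * θ) +
          cos θ ^ k * sin θ * sin ((j + 2 : ℕ) * θ)) / 2 := by
      intro θ
      rw [show (j : ℝ) * θ = (j + 1 : ℕ) * θ - θ by push_cast; ring,
        show ((j + 2 : ℕ) : ℝ) * θ = (j + 1 : ℕ) * θ + θ by push_cast; ring]
      linear_combination (cos θ ^ k * sin θ / 2) * two_mul_sin_mul_cos ((j + 1 : ℕ) * θ) θ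
    simp_rw [product_to_sum]
    rw [intervalIntegral.integral_div,
      intervalIntegral.integral_add (Continuous.intervalIntegrable (by fun_prop) _ _)
        (Continuous.intervalIntegrable (by fun_prop) _ _),
      ih (by omega), ih (by omega)]
    simp

lemma integral_eval_cos_mul_sin_mul_sin_eq_zero (p : ℝ[X]) {j : ℕ} (h : p.natDegree + 2 ≤ j) :
    ∫ θ in (0:ℝ)..π, p.eval (cos θ) * sin θ * sin (j * θ) = 0 := by
  simp_rw [eval_eq_sum_range (p := p), Finset.sum_mul]
  rw [intervalIntegral.integral_finsetSum fun _ _ =>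
    Continuous.intervalIntegrable (by fun_prop) _ _]
  refine Finset.sum_eq_zero fun r hr => ?_
  have hr : r + 2 ≤ j := by rw [Finset.mem_range] at hr; omega
  simp_rw [mul_assoc, intervalIntegral.integral_const_mul, ← mul_assoc,
    integral_cos_pow_mul_sin_mul_sin_eq_zero r hr, mul_zero]

lemma integral_eq_integral_comp_cos_mul_sin {g : ℝ → ℝ} (hg : Continuous g) :
    ∫ y in (-1:ℝ)..1, g y = ∫ θ in (0:ℝ)..π, g (cos θ) * sin θ := by
  have := intervalIntegral.integral_comp_mul_deriv (a := π) (b := 0)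
    (fun θ _ => hasDerivAt_cos θ) continuous_sin.neg.continuousOn hg
  rw [cos_pi, cos_zero] at this
  rw [← this, intervalIntegral.integral_symm, ← intervalIntegral.integral_neg]
  simp

-- The summands of `geg`, padded by zeros so that the sums for `n`, `n + 1`, `n + 2` align.
noncomputable def gegTerm (n k : ℕ) (y : ℝ) : ℝ :=
  if 2 * k ≤ n then
    (-1) ^ k * ((n - k + 1)! / (k ! * (n - 2 * k)! : ℝ)) * (2 * y) ^ (n - 2 * k)
  else 0

lemma geg_eq_sum_gegTerm (n : ℕ) {N : ℕ} (hN : n / 2 + 1 ≤ N) (y : ℝ) :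
    geg n y = ∑ k ∈ Finset.range N, gegTerm n k y := by
  rw [geg, ← Finset.sum_range_add_sum_Ico _ hN, Finset.sum_eq_zero (s := Finset.Ico _ _),
    add_zero]
  · refine Finset.sum_congr rfl fun k hk => ?_
    rw [gegTerm, if_pos (by rw [Finset.mem_range] at hk; omega)]
  · intro k hk
    rw [gegTerm, if_neg (by rw [Finset.mem_Ico] at hk; omega)]

lemma gegTerm_recurrence (n k : ℕ) (y : ℝ) :
    (n + 2) * gegTerm (n + 2) (k + 1) y + (n + 4) * gegTerm n k y =
      2 * (n + 3) * y * gegTerm (n + 1) (k + 1) y := by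
  unfold gegTerm
  rcases lt_trichotomy n (2 * k) with hn | rfl | hn
  · simp [show ¬ 2 * (k + 1) ≤ n + 2 by omega, show ¬ 2 * k ≤ n by omega,
      show ¬ 2 * (k + 1) ≤ n + 1 by omega]
  · rw [if_pos (by omega), if_pos le_rfl, if_neg (by omega),
      show 2 * k + 2 - (k + 1) + 1 = k + 2 by omega, show 2 * k - k + 1 = k + 1 by omega,
      Nat.sub_self, show 2 * k + 2 - 2 * (k + 1) = 0 by omega]
    simp only [factorial_succ, factorial_zero]
    push_cast
    field_simp
    ring
  · obtain ⟨d, rfl⟩ := Nat.exists_eq_add_of_lt hn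
    rw [if_pos (by omega), if_pos (by omega), if_pos (by omega),
      show 2 * k + d + 1 + 2 - (k + 1) + 1 = k + d + 3 by omega,
      show 2 * k + d + 1 + 2 - 2 * (k + 1) = d + 1 by omega,
      show 2 * k + d + 1 - k + 1 = k + d + 2 by omega,
      show 2 * k + d + 1 - 2 * k = d + 1 by omega,
      show 2 * k + d + 1 + 1 - (k + 1) + 1 = k + d + 2 by omega,
      show 2 * k + d + 1 + 1 - 2 * (k + 1) = d by omega]
    simp only [factorial_succ (k + d + 2), factorial_succ d, factorial_succ k, pow_succ]
    push_cast
    field_simp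
    ring

lemma geg_recurrence (n : ℕ) (y : ℝ) :
    (n + 2) * geg (n + 2) y = 2 * (n + 3) * y * geg (n + 1) y - (n + 4) * geg n y := by
  have leading : (n + 2) * gegTerm (n + 2) 0 y = 2 * (n + 3) * y * gegTerm (n + 1) 0 y := by
    simp only [gegTerm, if_pos (zero_le _), mul_zero, Nat.sub_zero, factorial_succ (n + 2),
      factorial_succ (n + 1), pow_succ]
    push_cast
    field_simp
    ring
  rw [geg_eq_sum_gegTerm (n + 2) (N := n + 3) (by omega),
    geg_eq_sum_gegTerm (n + 1) (N := n + 3) (by omega),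
    geg_eq_sum_gegTerm n (N := n + 2) (by omega),
    Finset.mul_sum, Finset.mul_sum, Finset.mul_sum,
    Finset.sum_range_succ' (fun k => (n + 2 : ℝ) * gegTerm (n + 2) k y),
    Finset.sum_range_succ' (fun k => 2 * (n + 3 : ℝ) * y * gegTerm (n + 1) k y),
    eq_sub_iff_add_eq, add_right_comm, leading, ← Finset.sum_add_distrib]
  exact congrArg (· + _) (Finset.sum_congr rfl fun k _ => gegTerm_recurrence n k y)

lemma geg_cos_mul_sin_pow_three (n : ℕ) (θ : ℝ) :
    geg n (cos θ) * sin θ ^ 3 =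
      ((n + 3) * sin ((n + 1) * θ) - (n + 1) * sin ((n + 3) * θ)) / 4 := by
  induction n using Nat.twoStepInduction with
  | zero =>
    norm_num [geg, sin_three_mul]
  | one =>
    norm_num [geg]
    rw [show (4 : ℝ) * θ = 2 * (2 * θ) by ring, sin_two_mul (2 * θ), sin_two_mul, cos_two_mul]
    linear_combination 4 * sin θ * cos θ * sin_sq_add_cos_sq θ
  | more n ih₀ ih₁ =>
    have hn : (n + 2 : ℝ) ≠ 0 := by positivity
    apply mul_left_cancel₀ hn
    push_cast at ih₁ ⊢
    -- the right sides obey the recurrence of `geg`: `2 cos θ sin x = sin (x - θ) + sin (x + θ)`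
    have e₂ := two_mul_sin_mul_cos ((n + 2) * θ) θ
    have e₄ := two_mul_sin_mul_cos ((n + 4) * θ) θ
    linear_combination (norm := ring_nf)
      sin θ ^ 3 * geg_recurrence n (cos θ) + 2 * (n + 3) * cos θ * ih₁ - (n + 4) * ih₀
        + ((n + 3) * (n + 4) / 4) * e₂ - ((n + 3) * (n + 2) / 4) * e₄

noncomputable def gegPoly (n : ℕ) : ℝ[X] :=
  ∑ k ∈ Finset.range (n / 2 + 1),
    C ((-1) ^ k * ((n - k + 1)! / (k ! * (n - 2 * k)! : ℝ)) * 2 ^ (n - 2 * k)) * X ^ (n - 2 * k)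

lemma eval_gegPoly (n : ℕ) (y : ℝ) : (gegPoly n).eval y = geg n y := by
  simp only [gegPoly, geg, eval_finsetSum, eval_mul, eval_C, eval_pow, eval_X, mul_pow]
  exact Finset.sum_congr rfl fun k _ => by ring

lemma natDegree_gegPoly_le (n : ℕ) : (gegPoly n).natDegree ≤ n :=
  natDegree_sum_le_of_forall_le _ _ fun _ _ =>
    (natDegree_C_mul_le _ _).trans ((natDegree_X_pow_le _).trans (Nat.sub_le _ _))

@[fun_prop]
lemma continuous_geg (n : ℕ) : Continuous (geg n) := by
  simpa only [eval_gegPoly] using (gegPoly n).continuous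

lemma integral_eval_mul_geg_mul_weight_eq_zero (p : ℝ[X]) {m : ℕ} (h : p.natDegree < m) :
    ∫ y in (-1:ℝ)..1, p.eval y * geg m y * (1 - y ^ 2) ^ ((3:ℝ) / 2) = 0 := by
  have substitute : ∀ θ ∈ Set.uIcc 0 π,
      p.eval (cos θ) * geg m (cos θ) * (1 - cos θ ^ 2) ^ ((3:ℝ) / 2) * sin θ =
        (m + 3) / 4 * (p.eval (cos θ) * sin θ * sin ((m + 1 : ℕ) * θ)) -
          (m + 1) / 4 * (p.eval (cos θ) * sin θ * sin ((m + 3 : ℕ) * θ)) := by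
    intro θ hθ
    rw [Set.uIcc_of_le pi_pos.le] at hθ
    have hsin : 0 ≤ sin θ := sin_nonneg_of_nonneg_of_le_pi hθ.1 hθ.2
    have weight : (1 - cos θ ^ 2) ^ ((3:ℝ) / 2) = sin θ ^ 3 := by
      rw [← sin_sq, ← rpow_natCast_mul hsin]
      norm_num
    rw [weight]
    push_cast
    linear_combination p.eval (cos θ) * sin θ * geg_cos_mul_sin_pow_three m θ
  rw [integral_eq_integral_comp_cos_mul_sin (by fun_prop (disch := norm_num)),
    intervalIntegral.integral_congr substitute,
    intervalIntegral.integral_sub (Continuous.intervalIntegrable (by fun_prop) _ _)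
      (Continuous.intervalIntegrable (by fun_prop) _ _),
    intervalIntegral.integral_const_mul, intervalIntegral.integral_const_mul,
    integral_eval_cos_mul_sin_mul_sin_eq_zero p (by omega),
    integral_eval_cos_mul_sin_mul_sin_eq_zero p (by omega)]
  ring

lemma cbar_eq_zero_of_add_lt {i j m : ℕ} (h : i + j < m) : cbar i j m = 0 := by
  have degree : (gegPoly i * gegPoly j).natDegree < m :=
    natDegree_mul_le.trans_lt
      ((Nat.add_le_add (natDegree_gegPoly_le i) (natDegree_gegPoly_le j)).trans_lt h)
  have orthogonal := integral_eval_mul_geg_mul_weight_eq_zero _ degree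
  simp only [eval_mul, eval_gegPoly] at orthogonal
  rw [cbar, orthogonal, mul_zero]

lemma cbar_swap₁₂ (i j m : ℕ) : cbar i j m = cbar j i m := by
  simp only [cbar, mul_comm (geg i _) (geg j _)]
  ring

lemma cbar_swap₂₃ (i j m : ℕ) : cbar i j m = cbar i m j := by
  simp only [cbar, mul_right_comm (geg i _) (geg j _) (geg m _)]
  ring

lemma le_add_of_cbar_ne_zero {i j m : ℕ} (h : cbar i j m ≠ 0) :
    m ≤ i + j ∧ j ≤ i + m ∧ i ≤ j + m := by
  refine ⟨?_, ?_, ?_⟩ <;> by_contra! hlt <;> apply h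
  · exact cbar_eq_zero_of_add_lt hlt
  · rw [cbar_swap₂₃]
    exact cbar_eq_zero_of_add_lt hlt
  · rw [cbar_swap₁₂, cbar_swap₂₃]
    exact cbar_eq_zero_of_add_lt hlt

/-- Vanishing products of quadratic Yang–Mills Fourier coefficients. -/
theorem cbar_products_vanish (γ ν m : ℕ) :
    cbar γ ν (3 * γ + 4) * cbar γ γ ν = 0 ∧
      cbar (2 * γ + m + 4) ν m * cbar γ γ ν = 0 ∧
      cbar γ ν m * cbar (2 * γ + m + 4) γ ν = 0 ∧
      (2 * γ + 4 ≤ m →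
        cbar γ ν m * cbar γ (m - 2 * γ - 4) ν = 0 ∧
          cbar (m - 2 * γ - 4) ν m * cbar γ γ ν = 0) := by
  refine ⟨?_, ?_, ?_, fun hm => ⟨?_, ?_⟩⟩ <;>
  · by_contra h
    obtain ⟨h₁, h₂⟩ := mul_ne_zero_iff.mp h
    have := le_add_of_cbar_ne_zero h₁
    have := le_add_of_cbar_ne_zero h₂
    omega
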